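/- Consider a single arc as in the context, and assume in addition that there is ν⁺ ≥ ε with f⁺(θ) ≤ ν⁺ for all θ. Then the waiting time function q is Lipschitz continuous on [0,∞) with Lipschitz constant max{(ν⁺ − ε)/ε, 1}, and consequently the exit time function T(θ) = θ + τ + q(θ) is Lipschitz continuous as well. -/

import Mathlib

open MeasureTheory
open scoped Classical

noncomputable section

/-- Cumulative flow `F(θ) = ∫₀^θ f` (which vanishes for `θ < 0` whenever `f`
vanishes on negatives). -/
def Fcum (f : ℝ → ℝ) (θ : ℝ) : ℝ := ∫ ξ in (0:ℝ)..θ, f ξ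

/-- The queue `z(θ) = F⁺(θ − τ) − F⁻(θ)`. -/
def queueLen (τ : ℝ) (fplus fminus : ℝ → ℝ) (θ : ℝ) : ℝ :=
  Fcum fplus (θ - τ) - Fcum fminus θ

/-- A single arc of a feasible flow over time: transit time `τ ≥ 0`, outflow
capacity `ν > 0`, inflow rate `fplus` and outflow rate `fminus` (locally integrable,
bounded, nonnegative, vanishing on negative times) with `fminus ≤ ν`, nonnegative
queues, and a lower bound `ε > 0` for the outflow rate whenever the queue is
positive (so that the waiting time is well-defined). -/
structure Arc where
  τ : ℝ
  ν : ℝ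
  ε : ℝ
  fplus : ℝ → ℝ
  fminus : ℝ → ℝ
  τ_nonneg : 0 ≤ τ
  ν_pos : 0 < ν
  ε_pos : 0 < ε
  fplus_nonneg : ∀ θ, 0 ≤ fplus θ
  fminus_nonneg : ∀ θ, 0 ≤ fminus θ
  fplus_zero_neg : ∀ θ, θ < 0 → fplus θ = 0
  fminus_zero_neg : ∀ θ, θ < 0 → fminus θ = 0
  fplus_bdd : ∃ M, ∀ θ, fplus θ ≤ M
  fplus_li : LocallyIntegrable fplus
  fminus_li : LocallyIntegrable fminus
  fminus_le_cap : ∀ θ, fminus θ ≤ ν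
  queue_nonneg : ∀ θ, 0 ≤ θ → 0 ≤ queueLen τ fplus fminus θ
  outflow_lb : ∀ θ, 0 < queueLen τ fplus fminus θ → ε ≤ fminus θ

namespace Arc

/-- Cumulative inflow `F⁺`. -/
def Fplus (A : Arc) (θ : ℝ) : ℝ := Fcum A.fplus θ

/-- Cumulative outflow `F⁻`. -/
def Fminus (A : Arc) (θ : ℝ) : ℝ := Fcum A.fminus θ

/-- The queue `z`. -/
def z (A : Arc) (θ : ℝ) : ℝ := queueLen A.τ A.fplus A.fminus θ

/-- The waiting time `q(θ)`. -/
def q (A : Arc) (θ : ℝ) : ℝ :=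
  sInf {q : ℝ | 0 ≤ q ∧
    (∫ ξ in (θ + A.τ)..(θ + A.τ + q), A.fminus ξ) = A.z (θ + A.τ)}

/-- The exit time `T(θ) = θ + τ + q(θ)`. -/
def T (A : Arc) (θ : ℝ) : ℝ := θ + A.τ + A.q θ

end Arc

end

/-!
While the queue is positive it drains at rate at least `ε`, so flow entering at time `θ`
leaves at the latest `z/ε` after reaching the queue; and the queue grows at rate at most
`ν⁺ - ε` (where it vanishes it does not grow at all). For entry times `θ₁ ≤ θ₂`: if `θ₁` leaves
after `θ₂` reaches the queue, then `θ₂` only waits for the at most `ν⁺ (θ₂ - θ₁)` flow that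
entered in between; otherwise it waits for the queue built up since `T θ₁`, which started from
at most `ν⁺ q θ₁`. Either way `q θ₂ ≤ q θ₁ + (ν⁺ - ε)/ε · (θ₂ - θ₁)`, and the FIFO property
(`T` is monotone) gives `q θ₁ ≤ q θ₂ + (θ₂ - θ₁)`.
-/

open Set

section Fcum

variable {f : ℝ → ℝ}

theorem MeasureTheory.LocallyIntegrable.intervalIntegrable (hf : LocallyIntegrable f) (a b : ℝ) :
    IntervalIntegrable f volume a b :=
  (hf.integrableOn_isCompact isCompact_uIcc).intervalIntegrable

theorem Fcum_sub_Fcum (hf : LocallyIntegrable f) (a b : ℝ) :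
    Fcum f b - Fcum f a = ∫ x in a..b, f x :=
  intervalIntegral.integral_interval_sub_left (hf.intervalIntegrable 0 b)
    (hf.intervalIntegrable 0 a)

theorem continuous_Fcum (hf : LocallyIntegrable f) : Continuous (Fcum f) :=
  intervalIntegral.continuous_primitive hf.intervalIntegrable 0

theorem monotone_Fcum (hf : LocallyIntegrable f) (h0 : ∀ x, 0 ≤ f x) : Monotone (Fcum f) :=
  fun a b hab => sub_nonneg.1 <| (Fcum_sub_Fcum hf a b).symm ▸
    intervalIntegral.integral_nonneg hab fun x _ => h0 x

theorem Fcum_sub_Fcum_le_mul (hf : LocallyIntegrable f) {M : ℝ} (hM : ∀ x, f x ≤ M) {a b : ℝ}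
    (hab : a ≤ b) : Fcum f b - Fcum f a ≤ M * (b - a) := by
  have h := intervalIntegral.integral_mono_on hab (hf.intervalIntegrable a b)
    intervalIntegrable_const fun x _ => hM x
  rw [intervalIntegral.integral_const, smul_eq_mul] at h
  rw [Fcum_sub_Fcum hf]
  linarith

theorem Fcum_add_mul_le (hf : LocallyIntegrable f) {ε a b : ℝ} (hab : a ≤ b)
    (hε : ∀ x ∈ Ioo a b, ε ≤ f x) : Fcum f a + ε * (b - a) ≤ Fcum f b := by
  have h := intervalIntegral.integral_mono_on_of_le_Ioo hab intervalIntegrable_const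
    (hf.intervalIntegrable a b) hε
  rw [intervalIntegral.integral_const, smul_eq_mul] at h
  linarith [Fcum_sub_Fcum hf a b]

end Fcum

namespace Arc

variable (A : Arc)

theorem continuous_Fminus : Continuous A.Fminus := continuous_Fcum A.fminus_li

theorem continuous_z : Continuous A.z :=
  ((continuous_Fcum A.fplus_li).comp (continuous_sub_right A.τ)).sub A.continuous_Fminus

theorem monotone_Fplus : Monotone A.Fplus := monotone_Fcum A.fplus_li A.fplus_nonneg

theorem monotone_Fminus : Monotone A.Fminus := monotone_Fcum A.fminus_li A.fminus_nonneg

theorem z_eq (t : ℝ) : A.z t = A.Fplus (t - A.τ) - A.Fminus t := rfl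

theorem z_add_τ (θ : ℝ) : A.z (θ + A.τ) = A.Fplus θ - A.Fminus (θ + A.τ) := by
  rw [z_eq, add_sub_cancel_right]

theorem z_nonneg {t : ℝ} (ht : 0 ≤ t) : 0 ≤ A.z t := A.queue_nonneg t ht

theorem Fminus_add_τ_le_Fplus {θ : ℝ} (hθ : 0 ≤ θ) : A.Fminus (θ + A.τ) ≤ A.Fplus θ :=
  sub_nonneg.1 <| A.z_add_τ θ ▸ A.z_nonneg (add_nonneg hθ A.τ_nonneg)

theorem Fminus_add_mul_le {a b : ℝ} (hab : a ≤ b) (hz : ∀ t ∈ Ioo a b, 0 < A.z t) :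
    A.Fminus a + A.ε * (b - a) ≤ A.Fminus b :=
  Fcum_add_mul_le A.fminus_li hab fun t ht => A.outflow_lb t (hz t ht)

theorem Fplus_sub_Fplus_le_mul {νplus : ℝ} (hcap : ∀ θ, A.fplus θ ≤ νplus) {a b : ℝ}
    (hab : a ≤ b) : A.Fplus b - A.Fplus a ≤ νplus * (b - a) :=
  Fcum_sub_Fcum_le_mul A.fplus_li hcap hab

theorem z_le_add_mul {νplus : ℝ} (hνε : A.ε ≤ νplus) (hcap : ∀ θ, A.fplus θ ≤ νplus)
    {b c : ℝ} (hb : 0 ≤ b) (hbc : b ≤ c) : A.z c ≤ A.z b + (νplus - A.ε) * (c - b) := by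
  -- after the last time `t₀` at which the queue is at most `z b`, it is positive
  obtain ⟨t₀, ⟨⟨hbt₀, ht₀c⟩, hzt₀⟩, ht₀_max⟩ :=
    (isCompact_Icc.inter_right (isClosed_le A.continuous_z continuous_const)).exists_isGreatest
      (⟨b, ⟨le_rfl, hbc⟩, le_refl (A.z b)⟩ : (Icc b c ∩ {t | A.z t ≤ A.z b}).Nonempty)
  have hpos : ∀ t ∈ Ioo t₀ c, 0 < A.z t := fun t ht =>
    (A.z_nonneg hb).trans_lt <| not_le.1 fun hle =>
      (ht₀_max ⟨⟨hbt₀.trans ht.1.le, ht.2.le⟩, hle⟩).not_gt ht.1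
  have hout := A.Fminus_add_mul_le ht₀c hpos
  have hin := A.Fplus_sub_Fplus_le_mul hcap (sub_le_sub_right ht₀c A.τ)
  have hmono : (νplus - A.ε) * (c - t₀) ≤ (νplus - A.ε) * (c - b) :=
    mul_le_mul_of_nonneg_left (by linarith) (by linarith)
  linarith [A.z_eq c, A.z_eq t₀, show A.z t₀ ≤ A.z b from hzt₀]

def waitSet (θ : ℝ) : Set ℝ := {s | 0 ≤ s ∧ A.Fminus (θ + A.τ + s) = A.Fplus θ}

theorem q_eq_sInf_waitSet (θ : ℝ) : A.q θ = sInf (A.waitSet θ) := by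
  have hint : ∀ s, ∫ ξ in (θ + A.τ)..(θ + A.τ + s), A.fminus ξ =
      A.Fminus (θ + A.τ + s) - A.Fminus (θ + A.τ) := fun s => (Fcum_sub_Fcum A.fminus_li _ _).symm
  simp only [q, waitSet, hint, z_add_τ, sub_left_inj]

theorem exists_Fminus_eq {θ c : ℝ} (hc : θ + A.τ ≤ c) (hF : A.Fminus c ≤ A.Fplus θ) :
    ∃ t ∈ Icc c (c + (A.Fplus θ - A.Fminus c) / A.ε), A.Fminus t = A.Fplus θ := by
  set b := c + (A.Fplus θ - A.Fminus c) / A.ε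
  have hcb : c ≤ b := le_add_of_nonneg_right (div_nonneg (sub_nonneg.2 hF) A.ε_pos.le)
  suffices hb : A.Fplus θ ≤ A.Fminus b from
    intermediate_value_Icc hcb A.continuous_Fminus.continuousOn ⟨hF, hb⟩
  by_contra! hlt
  have hpos : ∀ t ∈ Ioo c b, 0 < A.z t := fun t ht => by
    have hin := A.monotone_Fplus (show θ ≤ t - A.τ by linarith [ht.1])
    have hout := A.monotone_Fminus ht.2.le
    rw [z_eq]
    linarith
  have hdrain := A.Fminus_add_mul_le hcb hpos
  have hεb : A.ε * (b - c) = A.Fplus θ - A.Fminus c := by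
    simp only [b, add_sub_cancel_left]
    field_simp [A.ε_pos.ne']
  linarith

theorem q_mem_waitSet {θ : ℝ} (hθ : 0 ≤ θ) : A.q θ ∈ A.waitSet θ := by
  obtain ⟨t, ht, hFt⟩ := A.exists_Fminus_eq le_rfl (A.Fminus_add_τ_le_Fplus hθ)
  have hclosed : IsClosed (A.waitSet θ) :=
    isClosed_Ici.inter <| isClosed_eq
      (A.continuous_Fminus.comp (continuous_const.add continuous_id)) continuous_const
  rw [q_eq_sInf_waitSet]
  exact hclosed.csInf_mem ⟨t - (θ + A.τ), by linarith [ht.1], by rwa [add_sub_cancel]⟩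
    ⟨0, fun s hs => hs.1⟩

theorem q_nonneg {θ : ℝ} (hθ : 0 ≤ θ) : 0 ≤ A.q θ := (A.q_mem_waitSet hθ).1

theorem Fminus_T {θ : ℝ} (hθ : 0 ≤ θ) : A.Fminus (A.T θ) = A.Fplus θ := (A.q_mem_waitSet hθ).2

theorem add_le_T {θ : ℝ} (hθ : 0 ≤ θ) : θ + A.τ ≤ A.T θ :=
  le_add_of_nonneg_right (A.q_nonneg hθ)

theorem T_le_of_Fminus_eq {θ t : ℝ} (ht : θ + A.τ ≤ t) (hF : A.Fminus t = A.Fplus θ) :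
    A.T θ ≤ t := by
  have hq : A.q θ ≤ t - (θ + A.τ) := A.q_eq_sInf_waitSet θ ▸
    csInf_le ⟨0, fun s hs => hs.1⟩ ⟨by linarith, by rwa [add_sub_cancel]⟩
  unfold T
  linarith

theorem mul_T_sub_le {θ c : ℝ} (hc : θ + A.τ ≤ c) (hF : A.Fminus c ≤ A.Fplus θ) :
    A.ε * (A.T θ - c) ≤ A.Fplus θ - A.Fminus c := by
  obtain ⟨t, ⟨hct, htb⟩, hFt⟩ := A.exists_Fminus_eq hc hF
  have hTt := A.T_le_of_Fminus_eq (hc.trans hct) hFt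
  rw [← le_div_iff₀' A.ε_pos]
  linarith

theorem monotoneOn_T : MonotoneOn A.T (Ici 0) := by
  intro θ₁ h₁ θ₂ h₂ h12
  by_contra! h
  refine h.not_ge (A.T_le_of_Fminus_eq ?_ ?_)
  · linarith [A.add_le_T h₂]
  · exact le_antisymm ((A.monotone_Fminus h.le).trans_eq (A.Fminus_T h₁))
      ((A.monotone_Fplus h12).trans_eq (A.Fminus_T h₂).symm)

theorem q_le_q_add_sub {θ₁ θ₂ : ℝ} (h₁ : 0 ≤ θ₁) (h12 : θ₁ ≤ θ₂) :
    A.q θ₁ ≤ A.q θ₂ + (θ₂ - θ₁) := by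
  have hT := A.monotoneOn_T h₁ (h₁.trans h12 : 0 ≤ θ₂) h12
  unfold T at hT
  linarith

theorem q_le_q_add_mul {νplus : ℝ} (hνε : A.ε ≤ νplus) (hcap : ∀ θ, A.fplus θ ≤ νplus)
    {θ₁ θ₂ : ℝ} (h₁ : 0 ≤ θ₁) (h12 : θ₁ ≤ θ₂) :
    A.q θ₂ ≤ A.q θ₁ + (νplus - A.ε) / A.ε * (θ₂ - θ₁) := by
  suffices h : A.ε * A.q θ₂ ≤ A.ε * A.q θ₁ + (νplus - A.ε) * (θ₂ - θ₁) by
    rw [div_mul_eq_mul_div, ← sub_le_iff_le_add', le_div_iff₀' A.ε_pos]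
    linarith
  have hT₁ := A.Fminus_T h₁
  have hin := A.Fplus_sub_Fplus_le_mul hcap h12
  rcases le_total (θ₂ + A.τ) (A.T θ₁) with hlate | hearly
  · -- `θ₂` reaches the queue before `θ₁` leaves: it waits only for the flow entered in between
    have hdrain := A.mul_T_sub_le hlate (hT₁.trans_le (A.monotone_Fplus h12))
    rw [hT₁] at hdrain
    unfold T at hdrain
    linarith
  · -- `θ₁` leaves first: `θ₂` waits for the queue that has built up since `T θ₁`
    have hdrain := A.mul_T_sub_le le_rfl (A.Fminus_add_τ_le_Fplus (h₁.trans h12))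
    have hgrowth := A.z_le_add_mul hνε hcap (by linarith [A.add_le_T h₁, A.τ_nonneg]) hearly
    have hz₁ : A.z (A.T θ₁) ≤ νplus * A.q θ₁ := by
      have := A.Fplus_sub_Fplus_le_mul hcap
        (show θ₁ ≤ A.T θ₁ - A.τ by linarith [A.add_le_T h₁])
      rw [z_eq, hT₁]
      unfold T at this ⊢
      linarith
    unfold T at hdrain hgrowth hz₁
    linarith [A.z_add_τ θ₂]

end Arc

/-- **Lipschitz continuity of waiting and exit times.** For a single arc of a
feasible flow over time whose inflow rate is bounded by `ν⁺ ≥ ε`, the waiting time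
function `q` is Lipschitz continuous on `[0,∞)` with constant
`max ((ν⁺ − ε)/ε) 1`, and consequently the exit time function `T` is Lipschitz
continuous on `[0,∞)` as well. -/
theorem arc_wait_lipschitz (A : Arc) (νplus : ℝ)
    (hνε : A.ε ≤ νplus) (hcap : ∀ θ, A.fplus θ ≤ νplus) :
    LipschitzOnWith (Real.toNNReal (max ((νplus - A.ε) / A.ε) 1)) A.q (Set.Ici 0) ∧
    ∃ L : NNReal, LipschitzOnWith L A.T (Set.Ici 0) := by
  set K := max ((νplus - A.ε) / A.ε) 1
  have hq : LipschitzOnWith (Real.toNNReal K) A.q (Ici 0) := by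
    refine LipschitzOnWith.of_le_add_mul' K fun x hx y hy => ?_
    rw [Real.dist_eq]
    rcases le_total x y with hxy | hyx
    · have hK : y - x ≤ K * |x - y| := by
        rw [abs_sub_comm, abs_of_nonneg (sub_nonneg.2 hxy)]
        exact le_mul_of_one_le_left (sub_nonneg.2 hxy) (le_max_right _ _)
      linarith [A.q_le_q_add_sub hx hxy]
    · have hK : (νplus - A.ε) / A.ε * (x - y) ≤ K * |x - y| := by
        rw [abs_of_nonneg (sub_nonneg.2 hyx)]
        exact mul_le_mul_of_nonneg_right (le_max_left _ _) (sub_nonneg.2 hyx)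
      linarith [A.q_le_q_add_mul hνε hcap hy hyx]
  exact ⟨hq, _, (LipschitzWith.id.add (LipschitzWith.const A.τ)).lipschitzOnWith.add hq⟩
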